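/- arXiv:1210.4543 — 4 statements merged into one kernel-verified Lean document; each statement's English description precedes it below -/
import Mathlib

section
/- If a permutation α ∈ S_s consists of a single cycle of length s (s ≥ 2), then for any two distinct letters i < j in {1,...,s} there exists a k with 1 ≤ k < s such that α^k(i) > α^k(j). -/
/-!
Some power of `α` carries `i` to the largest letter, and this power is not the identity since
`i < j` forces `i` to be below the maximum. The same power sends `j` elsewhere, hence strictly
below the image of `i`.
-/

namespace Equiv.Perm

variable {α : Type*} [LinearOrder α] [Finite α]

theorem exists_pow_apply_lt_of_lt_of_forall_sameCycle {f : Perm α}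
    (hf : ∀ x y, f.SameCycle x y) {x y : α} (hxy : x < y) :
    ∃ k, 0 < k ∧ k < orderOf f ∧ (f ^ k) y < (f ^ k) x := by
  have : Nonempty α := ⟨x⟩
  obtain ⟨m, hm⟩ := Finite.exists_max (id : α → α)
  obtain ⟨k, hk, hkx⟩ := (hf x m).exists_pow_eq'
  have hxm : x ≠ m := (hxy.trans_le (hm y)).ne
  have hk0 : k ≠ 0 := by
    rintro rfl
    exact hxm hkx
  have hym : (f ^ k) y ≠ m := hkx ▸ (f ^ k).injective.ne hxy.ne'
  exact ⟨k, Nat.pos_of_ne_zero hk0, hk, hkx ▸ (hm _).lt_of_ne hym⟩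

end Equiv.Perm

theorem single_cycle_strings_cross_general (s : ℕ) (α : Equiv.Perm (Fin s))
    (hα : α.IsCycle ∧ α.support = Finset.univ) (i j : Fin s) (hij : i < j) :
    ∃ k : ℕ, 1 ≤ k ∧ k < s ∧ (α ^ k) j < (α ^ k) i := by
  obtain ⟨hcycle, hsupp⟩ := hα
  have hmoved : ∀ x, α x ≠ x := fun x => Equiv.Perm.mem_support.mp (hsupp ▸ Finset.mem_univ x)
  have horder : orderOf α = s := by
    rw [hcycle.orderOf, hsupp, Finset.card_univ, Fintype.card_fin]
  obtain ⟨k, hk0, hks, hk⟩ := Equiv.Perm.exists_pow_apply_lt_of_lt_of_forall_sameCycle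
    (fun x y => hcycle.sameCycle (hmoved x) (hmoved y)) hij
  exact ⟨k, hk0, horder ▸ hks, hk⟩

/-- If a permutation `α ∈ S_s` is a single cycle of length `s` (`s ≥ 2`), then for any
two letters `i < j` there is a `k` with `1 ≤ k < s` such that `α^k i > α^k j`. -/
theorem single_cycle_strings_cross (s : ℕ) (hs : 2 ≤ s) (α : Equiv.Perm (Fin s))
    (hα : α.IsCycle ∧ α.support = Finset.univ) (i j : Fin s) (hij : i < j) :
    ∃ k : ℕ, 1 ≤ k ∧ k < s ∧ (α ^ k) j < (α ^ k) i :=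
  single_cycle_strings_cross_general s α hα i j hij
end

section
/- The curve t ↦ (cos(2t+6), cos(3t+0.15), cos(4t+1)+cos(5t)) for t ∈ [0,2π] is a closed curve without self-intersections (i.e., it is injective on [0,2π)). -/
/-!
Write `u = t + s` and `d = t - s` for two parameters with the same image. Equality of the
first two coordinates gives `d ∈ πℤ` or `u + 6 ∈ πℤ`, and `3d ∈ 2πℤ` or `3u + 3/10 ∈ 2πℤ`.
By sum-to-product, equality of the third one reads
`sin (2u + 1) sin (2d) + sin (5u/2) sin (5d/2) = 0`. In each of the four combinations
either `d` is forced into `2πℤ`, hence `d = 0` since `|d| < 2π`, or one obtains a relation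
`n π = q` with `n ∈ ℤ` and `q` a nonzero rational, contradicting the irrationality of `π`.
-/

open Real

lemma intCast_mul_pi_ne_ratCast (n : ℤ) {q : ℚ} (hq : q ≠ 0) : (n : ℝ) * π ≠ q := by
  rcases eq_or_ne n 0 with rfl | hn
  · rw [Int.cast_zero, zero_mul, ne_comm]
    exact_mod_cast hq
  · exact (irrational_pi.intCast_mul hn).ne_rat q

lemma eq_zero_of_eq_even_mul_pi {x : ℝ} {n : ℤ} (hn : Even n) (hx : x = n * π)
    (hlt : |x| < 2 * π) : x = 0 := by
  obtain ⟨m, rfl⟩ := hn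
  rw [hx, abs_mul, abs_of_pos pi_pos] at hlt
  have hm : |m + m| < 2 := by exact_mod_cast (mul_lt_mul_iff_left₀ pi_pos).mp hlt
  have : m = 0 := by rw [abs_lt] at hm; omega
  simp [hx, this]

lemma eq_zero_of_eq_int_mul_pi_of_three_mul_eq {x : ℝ} {m n : ℤ} (hm : x = m * π)
    (hn : 3 * x = 2 * n * π) (hlt : |x| < 2 * π) : x = 0 := by
  have h3m : 3 * m = 2 * n := by
    have : ((3 * m : ℤ) : ℝ) * π = ((2 * n : ℤ) : ℝ) * π := by push_cast; linarith
    exact_mod_cast mul_right_cancel₀ pi_ne_zero this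
  exact eq_zero_of_eq_even_mul_pi (n := m) ⟨n - m, by omega⟩ hm hlt

lemma sin_sq_eq_sin_sq_iff (x y : ℝ) : sin x ^ 2 = sin y ^ 2 ↔ cos (2 * x) = cos (2 * y) := by
  rw [sin_sq_eq_half_sub, sin_sq_eq_half_sub]
  constructor <;> intro h <;> linarith

lemma sin_sq_five_mul_div_two_eq_sin_sq_two_mul {d : ℝ} {n : ℤ} (hd : 3 * d = 2 * n * π) :
    sin (5 * d / 2) ^ 2 = sin (2 * d) ^ 2 := by
  rw [sin_sq_eq_sin_sq_iff]
  calc cos (2 * (5 * d / 2)) = cos ((3 * n : ℤ) * (2 * π) - 2 * (2 * d)) := by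
        congr 1; push_cast; linarith
    _ = cos (2 * (2 * d)) := cos_int_mul_two_pi_sub _ _

lemma trefoil_z_sub_eq (s t : ℝ) :
    cos (4 * t + 1) + cos (5 * t) - (cos (4 * s + 1) + cos (5 * s)) =
      -2 * (sin (2 * (t + s) + 1) * sin (2 * (t - s)) +
        sin (5 * (t + s) / 2) * sin (5 * (t - s) / 2)) := by
  have h₁ := cos_sub_cos (4 * t + 1) (4 * s + 1)
  have h₂ := cos_sub_cos (5 * t) (5 * s)
  rw [show (4 * t + 1 + (4 * s + 1)) / 2 = 2 * (t + s) + 1 by ring,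
    show (4 * t + 1 - (4 * s + 1)) / 2 = 2 * (t - s) by ring] at h₁
  rw [show (5 * t + 5 * s) / 2 = 5 * (t + s) / 2 by ring,
    show (5 * t - 5 * s) / 2 = 5 * (t - s) / 2 by ring] at h₂
  linarith

lemma trefoil_diff_eq_zero_of_diff_eq_int_mul_pi {u d : ℝ} {a b : ℤ} (hd : d = a * π)
    (hlt : |d| < 2 * π) (hu : 3 * u + 3 / 10 = 2 * b * π)
    (hz : sin (2 * u + 1) * sin (2 * d) + sin (5 * u / 2) * sin (5 * d / 2) = 0) : d = 0 := by
  rcases Int.even_or_odd a with ha | ha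
  · exact eq_zero_of_eq_even_mul_pi ha hd hlt
  exfalso
  have h2d : sin (2 * d) = 0 := by
    rw [hd, ← mul_assoc]
    exact_mod_cast sin_int_mul_pi (2 * a)
  have h5d : sin (5 * d / 2) ≠ 0 := by
    rw [Ne, sin_eq_zero_iff]
    rintro ⟨m, hm⟩
    have : ((2 * m : ℤ) : ℝ) * π = ((5 * a : ℤ) : ℝ) * π := by push_cast; linarith
    have : 2 * m = 5 * a := by exact_mod_cast mul_right_cancel₀ pi_ne_zero this
    obtain ⟨k, hk⟩ := ha
    omega
  have h5u : sin (5 * u / 2) = 0 := by simpa [h2d, h5d] using hz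
  obtain ⟨m, hm⟩ := sin_eq_zero_iff.mp h5u
  exact intCast_mul_pi_ne_ratCast (10 * b - 6 * m) (q := 3 / 2) (by norm_num)
    (by push_cast; linarith)

lemma trefoil_diff_eq_zero_of_sum_eq_int_mul_pi {u d : ℝ} {a b : ℤ} (hu : u + 6 = a * π)
    (hd : 3 * d = 2 * b * π) (hlt : |d| < 2 * π)
    (hz : sin (2 * u + 1) * sin (2 * d) + sin (5 * u / 2) * sin (5 * d / 2) = 0) : d = 0 := by
  by_cases h2d : sin (2 * d) = 0
  · obtain ⟨m, hm⟩ := sin_eq_zero_iff.mp h2d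
    exact eq_zero_of_eq_int_mul_pi_of_three_mul_eq (m := 2 * b - m) (by push_cast; linarith) hd hlt
  exfalso
  have hsq : sin (2 * u + 1) ^ 2 = sin (5 * u / 2) ^ 2 := by
    have hz' : sin (2 * u + 1) * sin (2 * d) = -(sin (5 * u / 2) * sin (5 * d / 2)) := by
      linarith
    refine mul_right_cancel₀ (pow_ne_zero 2 h2d) ?_
    calc sin (2 * u + 1) ^ 2 * sin (2 * d) ^ 2 = (sin (2 * u + 1) * sin (2 * d)) ^ 2 := by ring
      _ = sin (5 * u / 2) ^ 2 * sin (5 * d / 2) ^ 2 := by rw [hz']; ring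
      _ = sin (5 * u / 2) ^ 2 * sin (2 * d) ^ 2 := by
        rw [sin_sq_five_mul_div_two_eq_sin_sq_two_mul hd]
  rw [sin_sq_eq_sin_sq_iff, cos_eq_cos_iff] at hsq
  obtain ⟨n, h | h⟩ := hsq
  · exact intCast_mul_pi_ne_ratCast (a - 2 * n) (q := 8) (by norm_num) (by push_cast; linarith)
  · exact intCast_mul_pi_ne_ratCast (9 * a - 2 * n) (q := 52) (by norm_num)
      (by push_cast; linarith)

/-- The Fourier parametrization
`t ↦ (cos(2t+6), cos(3t+0.15), cos(4t+1)+cos(5t))` of the trefoil is a closed curve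
without self-intersections: it is injective on `[0, 2π)`. -/
theorem trefoil_fourier_injective :
    Set.InjOn (fun t : ℝ =>
        ((Real.cos (2 * t + 6), Real.cos (3 * t + 0.15),
          Real.cos (4 * t + 1) + Real.cos (5 * t)) : ℝ × ℝ × ℝ))
      (Set.Ico 0 (2 * π)) := by
  intro s hs t ht hst
  simp only [Prod.mk.injEq] at hst
  obtain ⟨hx, hy, hz⟩ := hst
  have hlt : |t - s| < 2 * π :=
    abs_sub_lt_iff.mpr ⟨by linarith [hs.1, ht.2], by linarith [hs.2, ht.1]⟩
  have hz' := trefoil_z_sub_eq s t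
  rw [hz, sub_self, eq_comm, mul_eq_zero] at hz'
  replace hz' := hz'.resolve_left (by norm_num)
  rw [cos_eq_cos_iff] at hx hy
  norm_num at hy
  obtain ⟨a, hx | hx⟩ := hx <;> obtain ⟨b, hy | hy⟩ := hy
  · linarith [eq_zero_of_eq_int_mul_pi_of_three_mul_eq (x := t - s) (m := a) (n := b)
      (by linarith) (by linarith) hlt]
  · linarith [trefoil_diff_eq_zero_of_diff_eq_int_mul_pi (u := t + s) (a := a) (b := b)
      (by linarith) hlt (by linarith) hz']
  · linarith [trefoil_diff_eq_zero_of_sum_eq_int_mul_pi (u := t + s) (a := a) (b := b)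
      (by linarith) (by linarith) hlt hz']
  · exact (intCast_mul_pi_ne_ratCast (3 * a - 2 * b) (q := 177 / 10) (by norm_num)
      (by push_cast; linarith)).elim
end

section
/- The curve t ↦ (cos(2t+0.8), cos(3t+0.15), cos(4t+1)+cos(5t)) for t ∈ [0,2π] is a closed curve without self-intersections (i.e., it is injective on [0,2π)). -/
open Real

/-! Suppose `t, s ∈ [0, 2π)` have the same image and put `σ = s + t`, `d = s - t`. Equality of
a coordinate `cos (a x + b)` means that either `a d` or `a σ + 2b` lies in `2πℤ`. The first two
coordinates thus give four cases. When both constrain `d` (resp. both constrain `σ`), comparing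
them finishes the case directly. In the two mixed cases the third coordinate, rewritten by
sum-to-product as `sin (2σ + 1) sin 2d + sin (5σ/2) sin (5d/2) = 0`, excludes every solution
except `d ∈ 2πℤ`, i.e. `s = t`. Every contradiction has the form `jπ = c` with `j ∈ ℤ` and `c`
strictly between two consecutive multiples of `π`, so only `3 < π < 4` is needed. -/

lemma int_mul_pi_ne {j n : ℤ} {x : ℝ} (h₁ : n * π < x) (h₂ : x < (n + 1) * π) :
    (j : ℝ) * π ≠ x := by
  rintro rfl
  have h₁ : n < j := by exact_mod_cast lt_of_mul_lt_mul_right h₁ pi_pos.le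
  have h₂ : j < n + 1 := by exact_mod_cast lt_of_mul_lt_mul_right h₂ pi_pos.le
  omega

lemma int_eq_of_mul_pi_eq {a b : ℤ} (h : (a : ℝ) * π = b * π) : a = b := by
  exact_mod_cast mul_right_cancel₀ pi_ne_zero h

lemma eq_of_sub_eq_int_mul_two_pi {s t : ℝ} (hs : s ∈ Set.Ico 0 (2 * π))
    (ht : t ∈ Set.Ico 0 (2 * π)) {j : ℤ} (h : s - t = j * (2 * π)) : s = t := by
  obtain ⟨hs₀, hs₁⟩ := hs
  obtain ⟨ht₀, ht₁⟩ := ht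
  have hj₁ : j < 1 := by
    have : (j : ℝ) * (2 * π) < (1 : ℤ) * (2 * π) := by push_cast; linarith
    exact_mod_cast lt_of_mul_lt_mul_right this two_pi_pos.le
  have hj₂ : -1 < j := by
    have : ((-1 : ℤ) : ℝ) * (2 * π) < j * (2 * π) := by push_cast; linarith
    exact_mod_cast lt_of_mul_lt_mul_right this two_pi_pos.le
  obtain rfl : j = 0 := by omega
  simp only [Int.cast_zero, zero_mul, sub_eq_zero] at h
  exact h

lemma cos_two_mul_eq_of_sin_mul_add_sin_mul_eq_zero {a b u v : ℝ}
    (h : sin a * sin u + sin b * sin v = 0) (hu : sin u ≠ 0)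
    (huv : cos (2 * u) = cos (2 * v)) : cos (2 * a) = cos (2 * b) := by
  have hsq : sin u ^ 2 = sin v ^ 2 := by rw [sin_sq_eq_half_sub, sin_sq_eq_half_sub, huv]
  have hprod : (sin a * sin u) ^ 2 = (sin b * sin v) ^ 2 := by
    rw [eq_neg_of_add_eq_zero_left h, neg_sq]
  rw [mul_pow, mul_pow, ← hsq] at hprod
  rw [cos_two_mul, cos_two_mul, cos_sq', cos_sq', mul_right_cancel₀ (pow_ne_zero 2 hu) hprod]

lemma sin_mul_sin_add_sin_mul_sin_eq_zero {s t : ℝ}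
    (h : cos (4 * t + 1) + cos (5 * t) = cos (4 * s + 1) + cos (5 * s)) :
    sin (2 * (s + t) + 1) * sin (2 * (s - t)) +
      sin (5 * (s + t) / 2) * sin (5 * (s - t) / 2) = 0 := by
  have e₁ := cos_sub_cos (4 * s + 1) (4 * t + 1)
  have e₂ := cos_sub_cos (5 * s) (5 * t)
  rw [show (4 * s + 1 + (4 * t + 1)) / 2 = 2 * (s + t) + 1 by ring,
    show (4 * s + 1 - (4 * t + 1)) / 2 = 2 * (s - t) by ring] at e₁
  rw [show (5 * s + 5 * t) / 2 = 5 * (s + t) / 2 by ring,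
    show (5 * s - 5 * t) / 2 = 5 * (s - t) / 2 by ring] at e₂
  linarith

section MixedCases

variable {σ d : ℝ}

lemma exists_eq_int_mul_two_pi_of_eq_int_mul_pi {k m : ℤ} (hk : d = k * π)
    (hm : 3 * σ = 2 * m * π - 0.3)
    (key : sin (2 * σ + 1) * sin (2 * d) + sin (5 * σ / 2) * sin (5 * d / 2) = 0) :
    ∃ j : ℤ, d = j * (2 * π) := by
  obtain ⟨j, rfl | rfl⟩ := Int.even_or_odd' k
  · exact ⟨j, by push_cast at hk; linarith⟩
  exfalso
  have hu : sin (2 * d) = 0 :=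
    sin_eq_zero_iff.mpr ⟨2 * (2 * j + 1), by push_cast at hk ⊢; linarith⟩
  have hv : sin (5 * d / 2) ≠ 0 := by
    intro hv
    obtain ⟨n, hn⟩ := sin_eq_zero_iff.mp hv
    have := int_eq_of_mul_pi_eq (a := 2 * n) (b := 5 * (2 * j + 1))
      (by push_cast at hk ⊢; linarith)
    omega
  have hσ : sin (5 * σ / 2) = 0 := by
    rw [hu, mul_zero, zero_add, mul_eq_zero] at key
    exact key.resolve_right hv
  obtain ⟨n, hn⟩ := sin_eq_zero_iff.mp hσ
  exact int_mul_pi_ne (j := 10 * m - 6 * n) (n := 0) (x := 1.5) (by norm_num)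
    (by norm_num; linarith [pi_gt_three]) (by push_cast; linarith)

lemma exists_eq_int_mul_two_pi_of_three_mul_eq {k m : ℤ} (hk : 2 * σ = 2 * k * π - 1.6)
    (hm : 3 * d = 2 * m * π)
    (key : sin (2 * σ + 1) * sin (2 * d) + sin (5 * σ / 2) * sin (5 * d / 2) = 0) :
    ∃ j : ℤ, d = j * (2 * π) := by
  by_cases h3 : 3 ∣ m
  · obtain ⟨j, rfl⟩ := h3
    exact ⟨j, by push_cast at hm; linarith⟩
  exfalso
  have hu : sin (2 * d) ≠ 0 := by
    intro hu
    obtain ⟨n, hn⟩ := sin_eq_zero_iff.mp hu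
    have := int_eq_of_mul_pi_eq (a := 3 * n) (b := 4 * m) (by push_cast; linarith)
    omega
  -- `9d ∈ 2πℤ`, so `sin (2d)` and `sin (5d/2)` agree up to sign
  have huv : cos (2 * (2 * d)) = cos (2 * (5 * d / 2)) :=
    cos_eq_cos_iff.mpr ⟨3 * m, Or.inr (by push_cast; linarith)⟩
  have hσ := cos_two_mul_eq_of_sin_mul_add_sin_mul_eq_zero key hu huv
  obtain ⟨n, hn | hn⟩ := cos_eq_cos_iff.mp hσ
  · exact int_mul_pi_ne (j := k - 2 * n) (n := 0) (x := 2.8) (by norm_num)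
      (by norm_num; linarith [pi_gt_three]) (by push_cast; linarith)
  · exact int_mul_pi_ne (j := 9 * k - 2 * n) (n := 1) (x := 5.2)
      (by norm_num; linarith [pi_lt_four]) (by norm_num; linarith [pi_gt_three])
      (by push_cast; linarith)

end MixedCases

/-- The Fourier parametrization
`t ↦ (cos(2t+0.8), cos(3t+0.15), cos(4t+1)+cos(5t))` of the figure-eight knot is a
closed curve without self-intersections: it is injective on `[0, 2π)`. -/
theorem figure_eight_fourier_injective :
    Set.InjOn (fun t : ℝ =>
        ((Real.cos (2 * t + 0.8), Real.cos (3 * t + 0.15),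
          Real.cos (4 * t + 1) + Real.cos (5 * t)) : ℝ × ℝ × ℝ))
      (Set.Ico 0 (2 * π)) := by
  intro t ht s hs h
  simp only [Prod.mk.injEq] at h
  obtain ⟨hx, hy, hz⟩ := h
  have key := sin_mul_sin_add_sin_mul_sin_eq_zero hz
  suffices ∃ j : ℤ, s - t = j * (2 * π) by
    obtain ⟨j, hj⟩ := this
    exact (eq_of_sub_eq_int_mul_two_pi hs ht hj).symm
  obtain ⟨k, hk | hk⟩ := cos_eq_cos_iff.mp hx <;>
    obtain ⟨m, hm | hm⟩ := cos_eq_cos_iff.mp hy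
  · -- `πℤ ∩ (2π/3)ℤ = 2πℤ`
    exact ⟨m - k, by push_cast; linarith⟩
  · exact exists_eq_int_mul_two_pi_of_eq_int_mul_pi (k := k) (m := m)
      (by linarith) (by linarith) key
  · exact exists_eq_int_mul_two_pi_of_three_mul_eq (k := k) (m := m)
      (by linarith) (by linarith) key
  · exact (int_mul_pi_ne (j := 3 * k - 2 * m) (n := 0) (x := 2.1) (by norm_num)
      (by norm_num; linarith [pi_gt_three]) (by push_cast; linarith)).elim
end

section
/- For coprime positive integers p, q, the planar Lissajous-type curve t ↦ (cos(p t + φ), cos(q t + ψ)), t ∈ [0,2π], has only finitely many self-intersection points, provided the curve is not traversed multiply (generic phases φ, ψ). -/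
/-!
Each coordinate equation `cos (a t + c) = cos (a s + c)` says that either `a (s - t)` or
`a (t + s) + 2c` lies in `2πℤ`. If the "difference" alternative holds for both coordinates, Bézout
for the coprime `p, q` puts `s - t` in `2πℤ`, so `t = s` on `[0, 2π)`. If the "sum" alternative
holds for both, the tangent vectors at `t` and `s` are opposite, which transversality excludes.
In the two mixed cases `s - t` and `t + s` each solve a congruence `a x + c ≡ 0 mod 2π` with
`a ≠ 0`, which has only finitely many solutions in a bounded interval.
-/

open Real

def solutionsModTwoPi (a c : ℝ) : Set ℝ := {x | ∃ k : ℤ, a * x + c = 2 * k * π}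

theorem IsCompact.finite_inter_solutionsModTwoPi {K : Set ℝ} (hK : IsCompact K) {a : ℝ}
    (ha : a ≠ 0) (c : ℝ) : (K ∩ solutionsModTwoPi a c).Finite := by
  set index : ℝ → ℝ := fun x => (a * x + c) / (2 * π)
  have hindex : Continuous index := by fun_prop
  have hfin : ((Int.cast : ℤ → ℝ) ⁻¹' (index '' K)).Finite :=
    (Int.isClosedEmbedding_coe_real.isCompact_preimage (hK.image hindex)).finite_of_discrete
  refine (hfin.image fun k : ℤ => (2 * k * π - c) / a).subset ?_
  rintro x ⟨hxK, k, hk⟩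
  refine ⟨k, ⟨x, hxK, ?_⟩, ?_⟩
  · simp only [index, hk]
    field_simp
  · simp only [← hk]
    field_simp
    ring

theorem cos_mul_add_eq_cos_mul_add_iff (a c t s : ℝ) :
    cos (a * t + c) = cos (a * s + c) ↔
      s - t ∈ solutionsModTwoPi a 0 ∨ t + s ∈ solutionsModTwoPi a (2 * c) := by
  simp only [cos_eq_cos_iff, solutionsModTwoPi, Set.mem_ofPred_eq]
  constructor
  · rintro ⟨k, h | h⟩
    · exact Or.inl ⟨k, by linarith⟩
    · exact Or.inr ⟨k, by linarith⟩
  · rintro (⟨k, h⟩ | ⟨k, h⟩)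
    · exact ⟨k, Or.inl (by linarith)⟩
    · exact ⟨k, Or.inr (by linarith)⟩

theorem mem_solutionsModTwoPi_one_of_coprime {p q : ℕ} (hpq : Nat.Coprime p q) {x : ℝ}
    (hp : x ∈ solutionsModTwoPi p 0) (hq : x ∈ solutionsModTwoPi q 0) :
    x ∈ solutionsModTwoPi 1 0 := by
  obtain ⟨k, hk⟩ := hp
  obtain ⟨m, hm⟩ := hq
  obtain ⟨u, v, huv⟩ := hpq.isCoprime
  refine ⟨u * k + v * m, ?_⟩
  have huv' : (u : ℝ) * p + v * q = 1 := by exact_mod_cast huv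
  calc 1 * x + 0 = u * (p * x + 0) + v * (q * x + 0) := by rw [← huv']; ring
    _ = _ := by rw [hk, hm]; push_cast; ring

theorem eq_zero_of_mem_solutionsModTwoPi_one {x : ℝ} (hx : x ∈ solutionsModTwoPi 1 0)
    (hlt : |x| < 2 * π) : x = 0 := by
  obtain ⟨k, hk⟩ := hx
  have hk' : x = k * (2 * π) := by linarith
  rw [hk', abs_mul, abs_of_pos two_pi_pos, mul_lt_iff_lt_one_left two_pi_pos] at hlt
  have hk0 : k = 0 := Int.abs_lt_one_iff.mp (by exact_mod_cast hlt)
  simp [hk', hk0]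

theorem sin_mul_add_eq_neg_of_mem_solutionsModTwoPi {a c t s : ℝ}
    (h : t + s ∈ solutionsModTwoPi a (2 * c)) : sin (a * s + c) = -sin (a * t + c) := by
  obtain ⟨k, hk⟩ := h
  rw [← sin_int_mul_two_pi_sub]
  congr 1
  linarith

theorem neg_mul_sin_pair_eq_neg_of_mem_solutionsModTwoPi {a b c d t s : ℝ}
    (ha : t + s ∈ solutionsModTwoPi a (2 * c)) (hb : t + s ∈ solutionsModTwoPi b (2 * d)) :
    ((-a * sin (a * s + c), -b * sin (b * s + d)) : ℝ × ℝ) =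
      -(-a * sin (a * t + c), -b * sin (b * t + d)) := by
  rw [sin_mul_add_eq_neg_of_mem_solutionsModTwoPi ha, sin_mul_add_eq_neg_of_mem_solutionsModTwoPi hb]
  ext <;> simp

theorem not_linearIndependent_pair_neg {R M : Type*} [Ring R] [Nontrivial R] [AddCommGroup M]
    [Module R M] (v : M) : ¬ LinearIndependent R ![v, -v] := fun h =>
  one_ne_zero (LinearIndependent.pair_iff.mp h 1 1 (by simp)).1

/-- For coprime positive `p, q`, the Lissajous curve `t ↦ (cos(pt+φ), cos(qt+ψ))` on
`[0,2π)` has only finitely many self-intersection parameter pairs, provided all its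
double points are transverse (the genericity hypothesis on the phases): whenever two
distinct parameters give the same point, the tangent vectors there are linearly
independent. -/
theorem lissajous_finitely_many_crossings (p q : ℕ) (hp : 0 < p) (hq : 0 < q)
    (hpq : Nat.Coprime p q) (φ ψ : ℝ)
    (hgen : ∀ t s : ℝ, t ∈ Set.Ico 0 (2 * π) → s ∈ Set.Ico 0 (2 * π) → t ≠ s →
      Real.cos (p * t + φ) = Real.cos (p * s + φ) →
      Real.cos (q * t + ψ) = Real.cos (q * s + ψ) →
      LinearIndependent ℝ
        ![((-(p : ℝ) * Real.sin (p * t + φ), -(q : ℝ) * Real.sin (q * t + ψ)) : ℝ × ℝ),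
          ((-(p : ℝ) * Real.sin (p * s + φ), -(q : ℝ) * Real.sin (q * s + ψ)) : ℝ × ℝ)]) :
    Set.Finite {ts : ℝ × ℝ | ts.1 ∈ Set.Ico 0 (2 * π) ∧ ts.2 ∈ Set.Ico 0 (2 * π) ∧
      ts.1 ≠ ts.2 ∧
      Real.cos (p * ts.1 + φ) = Real.cos (p * ts.2 + φ) ∧
      Real.cos (q * ts.1 + ψ) = Real.cos (q * ts.2 + ψ)} := by
  have hp0 : (p : ℝ) ≠ 0 := by positivity
  have hq0 : (q : ℝ) ≠ 0 := by positivity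
  have hK : IsCompact (Set.Icc (-(4 * π)) (4 * π)) := isCompact_Icc
  have hfin := ((hK.finite_inter_solutionsModTwoPi hp0 0).prod
      (hK.finite_inter_solutionsModTwoPi hq0 (2 * ψ))).union
    ((hK.finite_inter_solutionsModTwoPi hq0 0).prod
      (hK.finite_inter_solutionsModTwoPi hp0 (2 * φ)))
  refine (hfin.image fun uv : ℝ × ℝ => ((uv.2 - uv.1) / 2, (uv.2 + uv.1) / 2)).subset ?_
  rintro ⟨t, s⟩ ⟨ht, hs, hts, hcp, hcq⟩
  have hdiff : |s - t| < 2 * π := abs_sub_lt_of_nonneg_of_lt hs.1 hs.2 ht.1 ht.2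
  have hdiffK : s - t ∈ Set.Icc (-(4 * π)) (4 * π) := by
    constructor <;> linarith [ht.1, ht.2, hs.1, hs.2, pi_pos]
  have hsumK : t + s ∈ Set.Icc (-(4 * π)) (4 * π) := by
    constructor <;> linarith [ht.1, ht.2, hs.1, hs.2, pi_pos]
  refine ⟨(s - t, t + s), ?_, by ext <;> simp only <;> ring⟩
  rcases (cos_mul_add_eq_cos_mul_add_iff _ _ _ _).mp hcp with hpd | hps <;>
    rcases (cos_mul_add_eq_cos_mul_add_iff _ _ _ _).mp hcq with hqd | hqs
  · have hst : s - t = 0 := eq_zero_of_mem_solutionsModTwoPi_one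
      (mem_solutionsModTwoPi_one_of_coprime hpq hpd hqd) hdiff
    exact absurd (by linarith) hts
  · exact Or.inl ⟨⟨hdiffK, hpd⟩, hsumK, hqs⟩
  · exact Or.inr ⟨⟨hdiffK, hqd⟩, hsumK, hps⟩
  · have hli := hgen t s ht hs hts hcp hcq
    rw [neg_mul_sin_pair_eq_neg_of_mem_solutionsModTwoPi hps hqs] at hli
    exact (not_linearIndependent_pair_neg _ hli).elim
end
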